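/- arXiv:2508.16091 — 2 statements merged into one kernel-verified Lean document; each statement's English description precedes it below -/
import Mathlib

section
/- For a regular matrix pencil (E, A), i.e., square matrices E, A ∈ ℝ^{n×n} with det(λE − A) ≠ 0 for some λ ∈ ℂ, there exist invertible matrices S, P ∈ ℝ^{n×n} such that SEP = diag(I_q, N) and SAP = diag(A₁, I_r) where N ∈ ℝ^{r×r} is nilpotent and q + r = n. -/
/-!
As `det (X • E - A)` is a nonzero polynomial, some real `l` makes `M = l • E - A` invertible.
The Fitting decomposition of `M⁻¹ * E` conjugates it to `diag (J, N₀)` with `J` invertible and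
`N₀` nilpotent; since `M⁻¹ * A = l • M⁻¹ * E - 1`, multiplying both pencils on the left by
`diag (J, l • N₀ - 1)⁻¹` (the second block is invertible because `N₀` is nilpotent) turns them
into `diag (1, N)` and `diag (l - J⁻¹, 1)` with `N = (l • N₀ - 1)⁻¹ * N₀` nilpotent.
-/

open Matrix

section RegularPencil

open Polynomial

variable {K L n : Type*} [CommRing K] [CommRing L] [Algebra K L] [Fintype n] [DecidableEq n]

theorem Matrix.aeval_det_X_smul_sub (E A : Matrix n n K) (x : L) :
    aeval x ((X : K[X]) • E.map C - A.map C).det =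
      (x • E.map (algebraMap K L) - A.map (algebraMap K L)).det := by
  rw [AlgHom.map_det]
  congr 1
  ext i j
  simpa using mul_comm _ _

theorem Matrix.exists_det_smul_sub_ne_zero [IsDomain K] [Infinite K] {E A : Matrix n n K}
    (hreg : ∃ μ : L, (μ • E.map (algebraMap K L) - A.map (algebraMap K L)).det ≠ 0) :
    ∃ l : K, (l • E - A).det ≠ 0 := by
  obtain ⟨μ, hμ⟩ := hreg
  have hp : ((X : K[X]) • E.map C - A.map C).det ≠ 0 := by
    intro hp
    rw [← aeval_det_X_smul_sub, hp, map_zero] at hμ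
    exact hμ rfl
  obtain ⟨l, hl⟩ : ∃ l, eval l ((X : K[X]) • E.map C - A.map C).det ≠ 0 := by
    by_contra! h
    exact hp (zero_of_eval_zero _ h)
  refine ⟨l, ?_⟩
  rw [← coe_aeval_eq_eval, aeval_det_X_smul_sub] at hl
  simpa using hl

end RegularPencil

theorem LinearMap.toMatrix_map_prodEquivOfIsCompl {R M ι κ : Type*} [CommRing R]
    [AddCommGroup M] [Module R M] [Fintype ι] [Fintype κ] [DecidableEq ι] [DecidableEq κ]
    {p q : Submodule R M} (h : IsCompl p q) (bp : Module.Basis ι R p) (bq : Module.Basis κ R q)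
    (f : Module.End R M) (hp : ∀ x ∈ p, f x ∈ p) (hq : ∀ x ∈ q, f x ∈ q) :
    toMatrix ((bp.prod bq).map (p.prodEquivOfIsCompl q h))
        ((bp.prod bq).map (p.prodEquivOfIsCompl q h)) f =
      fromBlocks (toMatrix bp bp (f.restrict hp)) 0 0 (toMatrix bq bq (f.restrict hq)) := by
  rw [toMatrix_map_left, toMatrix_map_right, ← toMatrix_prodMap]
  congr 1
  ext x <;> simp [hp, hq]

namespace Module.End

open LinearMap

section CommRing

variable {R M : Type*} [CommRing R] [AddCommGroup M] [Module R M]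

theorem apply_mem_ker_pow (f : End R M) (k : ℕ) {x : M} (hx : x ∈ ker (f ^ k)) :
    f x ∈ ker (f ^ k) := by
  rw [mem_ker] at hx ⊢
  rw [← mul_apply, ← pow_succ, pow_succ', mul_apply, hx, map_zero]

theorem apply_mem_range_pow (f : End R M) (k : ℕ) {x : M} (hx : x ∈ range (f ^ k)) :
    f x ∈ range (f ^ k) := by
  obtain ⟨y, rfl⟩ := hx
  exact ⟨f y, by rw [← mul_apply, ← pow_succ, pow_succ', mul_apply]⟩

theorem isNilpotent_restrict_ker_pow (f : End R M) (k : ℕ) :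
    IsNilpotent (f.restrict fun _ ↦ f.apply_mem_ker_pow k) := by
  refine ⟨k, LinearMap.ext fun x ↦ Subtype.ext ?_⟩
  rw [pow_restrict, coe_restrict_apply]
  exact x.2

end CommRing

variable {K V : Type*} [Field K] [AddCommGroup V] [Module K V] [FiniteDimensional K V]

theorem bijective_restrict_range_pow (f : End K V) {k : ℕ} (hk0 : k ≠ 0)
    (hk : Disjoint (ker (f ^ k)) (range (f ^ k))) :
    Function.Bijective (f.restrict fun _ ↦ f.apply_mem_range_pow k) := by
  have hinj : Function.Injective (f.restrict fun _ ↦ f.apply_mem_range_pow k) := by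
    rw [← ker_eq_bot, Submodule.eq_bot_iff]
    rintro ⟨x, hx⟩ hfx
    have hfx0 : f x = 0 := congrArg Subtype.val (mem_ker.mp hfx)
    have hxk : x ∈ ker (f ^ k) := by
      obtain ⟨j, rfl⟩ := Nat.exists_eq_succ_of_ne_zero hk0
      rw [mem_ker, pow_succ, mul_apply, hfx0, map_zero]
    simpa using hk.le_bot ⟨hxk, hx⟩
  exact ⟨hinj, injective_iff_surjective.mp hinj⟩

theorem exists_basis_toMatrix_eq_fromBlocks (f : End K V) :
    ∃ (q r : ℕ) (b : Basis (Fin q ⊕ Fin r) K V) (J : Matrix (Fin q) (Fin q) K)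
      (N : Matrix (Fin r) (Fin r) K), IsUnit J ∧ IsNilpotent N ∧
        toMatrix b b f = fromBlocks J 0 0 N := by
  obtain ⟨k, hk, hk0⟩ :=
    (f.eventually_isCompl_ker_pow_range_pow.and (Filter.eventually_ne_atTop 0)).exists
  refine ⟨_, _, _, _, _, ?_, ?_, toMatrix_map_prodEquivOfIsCompl hk.symm (finBasis K _)
    (finBasis K _) f (fun _ ↦ f.apply_mem_range_pow k) (fun _ ↦ f.apply_mem_ker_pow k)⟩
  · rw [isUnit_toMatrix_iff, isUnit_iff]
    exact f.bijective_restrict_range_pow hk0 hk.disjoint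
  · exact (f.isNilpotent_restrict_ker_pow k).map (toMatrixAlgEquiv _)

end Module.End

namespace Matrix

variable (R : Type*) [CommSemiring R]

def fromBlocksDiagAlgHom (m n : Type*) [Fintype m] [Fintype n] [DecidableEq m]
    [DecidableEq n] : Matrix m m R × Matrix n n R →ₐ[R] Matrix (m ⊕ n) (m ⊕ n) R where
  toFun X := fromBlocks X.1 0 0 X.2
  map_one' := fromBlocks_one
  map_mul' X Y := by simp [fromBlocks_multiply]
  map_zero' := fromBlocks_zero
  map_add' X Y := by simp [fromBlocks_add]
  commutes' r := by simp [algebraMap_eq_diagonal, fromBlocks_diagonal]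

/-- `finSumBlockDiag R hqr (X, Y)` unfolds to `(fromBlocks X 0 0 Y).submatrix e e` with
`e i = finSumFinEquiv.symm (Fin.cast hqr.symm i)`. -/
def finSumBlockDiag {q r n : ℕ} (hqr : q + r = n) :
    Matrix (Fin q) (Fin q) R × Matrix (Fin r) (Fin r) R →ₐ[R] Matrix (Fin n) (Fin n) R :=
  (reindexAlgEquiv R R (finSumFinEquiv.trans (finCongr hqr))).toAlgHom.comp
    (fromBlocksDiagAlgHom R _ _)

theorem exists_inv_mul_mul_eq_finSumBlockDiag {K : Type*} [Field K] {n : ℕ}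
    (F : Matrix (Fin n) (Fin n) K) :
    ∃ (q r : ℕ) (hqr : q + r = n) (P : Matrix (Fin n) (Fin n) K)
      (J : Matrix (Fin q) (Fin q) K) (N : Matrix (Fin r) (Fin r) K),
      IsUnit P ∧ IsUnit J ∧ IsNilpotent N ∧ P⁻¹ * F * P = finSumBlockDiag K hqr (J, N) := by
  obtain ⟨q, r, b, J, N, hJ, hN, hb⟩ :=
    Module.End.exists_basis_toMatrix_eq_fromBlocks (toLin' F)
  have hqr : q + r = n := by
    simpa using Fintype.card_congr (b.indexEquiv (Pi.basisFun K (Fin n)))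
  set e := finSumFinEquiv.trans (finCongr hqr)
  set b' := b.reindex e
  set std := Pi.basisFun K (Fin n)
  have hleft : b'.toMatrix std * std.toMatrix b' = 1 := b'.toMatrix_mul_toMatrix_flip std
  have hF : F = LinearMap.toMatrix std std (toLin' F) := by
    rw [LinearMap.toMatrix_eq_toMatrix', LinearMap.toMatrix'_toLin']
  have hb' : LinearMap.toMatrix b' b' (toLin' F) =
      reindex e e (LinearMap.toMatrix b b (toLin' F)) := by
    ext i j
    simp only [b', LinearMap.toMatrix_apply, Module.Basis.repr_reindex_apply,
      Module.Basis.reindex_apply, reindex_apply, submatrix_apply]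
  refine ⟨q, r, hqr, std.toMatrix b', J, N, ?_, hJ, hN, ?_⟩
  · exact (isUnit_iff_isUnit_det _).2 (isUnit_det_of_left_inverse hleft)
  · rw [inv_eq_left_inv hleft, hF, basis_toMatrix_mul_linearMap_toMatrix_mul_basis_toMatrix,
      hb', hb]
    rfl

end Matrix

theorem AlgHom.exists_pencil_normal_form {K R R₁ R₂ : Type*} [CommRing K] [Ring R] [Ring R₁]
    [Ring R₂] [Algebra K R] [Algebra K R₁] [Algebra K R₂] (β : R₁ × R₂ →ₐ[K] R)
    {E A S₀ P : R} {l : K} {J : R₁} {N₀ : R₂} (hS₀ : IsUnit S₀) (hJ : IsUnit J)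
    (hN₀ : IsNilpotent N₀) (hM : S₀ * (l • E - A) * P = 1) (hE : S₀ * E * P = β (J, N₀)) :
    ∃ (S : R) (A₁ : R₁) (N : R₂), IsUnit S ∧ IsNilpotent N ∧
      S * E * P = β (1, N) ∧ S * A * P = β (A₁, 1) := by
  obtain ⟨u, rfl⟩ := hJ
  obtain ⟨v, hv⟩ := (hN₀.smul l).isUnit_sub_one
  have hvN₀ : Commute (↑v⁻¹ : R₂) N₀ := by
    refine Commute.units_inv_left ?_
    rw [hv]
    exact ((Commute.refl N₀).smul_left l).sub_left (Commute.one_left N₀)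
  set D := β (↑u⁻¹, ↑v⁻¹)
  have hSE : D * S₀ * E * P = β (1, ↑v⁻¹ * N₀) := by
    rw [mul_assoc D, mul_assoc D, hE, ← map_mul, Prod.mk_mul_mk, u.inv_mul]
  refine ⟨D * S₀, l • 1 - ↑u⁻¹, ↑v⁻¹ * N₀, ?_, hvN₀.isNilpotent_mul_left hN₀, hSE, ?_⟩
  · exact ((Prod.isUnit_iff.2 ⟨u⁻¹.isUnit, v⁻¹.isUnit⟩).map β).mul hS₀
  calc D * S₀ * A * P = l • (D * S₀ * E * P) - D * (S₀ * (l • E - A) * P) := by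
        simp only [mul_sub, sub_mul, mul_smul_comm, smul_mul_assoc, mul_assoc]
        abel
    _ = β (l • 1 - ↑u⁻¹, ↑v⁻¹ * (l • N₀ - 1)) := by
        rw [hSE, hM, mul_one, ← map_smul, ← map_sub, mul_sub, mul_smul_comm, mul_one]
        rfl
    _ = β (l • 1 - ↑u⁻¹, 1) := by rw [← hv, v.inv_mul]

/-- Quasi-Weierstrass form of a regular matrix pencil `(E, A)`. -/
theorem quasi_weierstrass_form (n : ℕ) (E A : Matrix (Fin n) (Fin n) ℝ)
    (hreg : ∃ lam : ℂ,
      (lam • E.map (Complex.ofReal) - A.map (Complex.ofReal)).det ≠ 0) :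
    ∃ (q r : ℕ) (hqr : q + r = n) (S P : Matrix (Fin n) (Fin n) ℝ),
      IsUnit S ∧ IsUnit P ∧
      ∃ (A1 : Matrix (Fin q) (Fin q) ℝ) (N : Matrix (Fin r) (Fin r) ℝ),
        IsNilpotent N ∧
        S * E * P =
          (Matrix.fromBlocks (1 : Matrix (Fin q) (Fin q) ℝ) 0 0 N).submatrix
            (fun i => finSumFinEquiv.symm (Fin.cast hqr.symm i))
            (fun i => finSumFinEquiv.symm (Fin.cast hqr.symm i)) ∧
        S * A * P =
          (Matrix.fromBlocks A1 0 0 (1 : Matrix (Fin r) (Fin r) ℝ)).submatrix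
            (fun i => finSumFinEquiv.symm (Fin.cast hqr.symm i))
            (fun i => finSumFinEquiv.symm (Fin.cast hqr.symm i)) := by
  obtain ⟨l, hl⟩ := exists_det_smul_sub_ne_zero hreg
  set M := l • E - A
  have hM : IsUnit M := (isUnit_iff_isUnit_det M).2 hl.isUnit
  obtain ⟨q, r, hqr, P, J, N₀, hP, hJ, hN₀, hPF⟩ :=
    exists_inv_mul_mul_eq_finSumBlockDiag (M⁻¹ * E)
  have hS₀M : P⁻¹ * M⁻¹ * M * P = 1 := by
    rw [nonsing_inv_mul_cancel_right _ _ hl.isUnit,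
      nonsing_inv_mul _ ((isUnit_iff_isUnit_det P).1 hP)]
  obtain ⟨S, A1, N, hS, hN, hSE, hSA⟩ :=
    (finSumBlockDiag ℝ hqr).exists_pencil_normal_form (S₀ := P⁻¹ * M⁻¹)
      ((isUnit_nonsing_inv_iff.2 hP).mul (isUnit_nonsing_inv_iff.2 hM)) hJ hN₀ hS₀M
      (by rw [← hPF, mul_assoc P⁻¹])
  exact ⟨q, r, hqr, S, P, hS, hP, A1, N, hN, hSE, hSA⟩
end

section
/- Let (u, y) be an input-output trajectory of a regular descriptor system in quasi-Weierstrass form with n = q + r. If there exists L ≥ max{q, r} such that rank[H_L(u_{[0,T−1]}); H_L(y_{[0,T−1]})] = n + mL, then both (A₁, C₁) and (N, C₂) are observable pairs, i.e., the system is C-observable. -/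
open Matrix

/-- Block Hankel matrix with `L` block rows and `c` columns built from the time
series `w` shifted by `t`. -/
def Hank (d : ℕ) (L c t : ℕ) (w : ℕ → Fin d → ℝ) : Matrix (Fin L × Fin d) (Fin c) ℝ :=
  fun ik j => w (t + (ik.1 : ℕ) + (j : ℕ)) ik.2

/-- Stacked observability matrix with `L` block rows. -/
def obsMat {a b : ℕ} (C : Matrix (Fin a) (Fin b) ℝ) (A : Matrix (Fin b) (Fin b) ℝ)
    (L : ℕ) : Matrix (Fin L × Fin a) (Fin b) ℝ :=
  fun ki j => (C * A ^ (ki.1 : ℕ)) ki.2 j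

/-!
Every column of the stacked Hankel matrix equals `Q w`, where `w` collects the slow state at the
column's first time step, the fast state at its last one, and the input window: the slow state is
propagated forward, the fast state backward, and the inputs in between enter through a Toeplitz
block. As `Q = [0 I; O_s O_f T]` has `n + mL` columns, the rank hypothesis makes `Q` injective,
hence also `O_s` and `O_f`. By Cayley–Hamilton the kernel of an observability matrix with any
number of block rows contains that of the one with `q` (resp. `r`) block rows.
-/

open Finset Polynomial Function

namespace Matrix

theorem mulVec_injective_of_card_le_rank_mul {K l m n : Type*} [Field K] [Fintype m]
    [Fintype n] (A : Matrix l m K) (B : Matrix m n K) (h : Fintype.card m ≤ (A * B).rank) :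
    Injective A.mulVec := by
  have hrank := A.mulVecLin.finrank_range_add_finrank_ker
  rw [Module.finrank_fintype_fun_eq_card] at hrank
  have hker : Module.finrank K (LinearMap.ker A.mulVecLin) = 0 := by
    have := h.trans (rank_mul_le_left A B)
    rw [rank] at this
    omega
  exact LinearMap.ker_eq_bot.mp (Submodule.finrank_eq_zero.mp hker)

theorem rank_eq_card_of_mulVec_injective {K l m : Type*} [Field K] [Fintype m]
    (A : Matrix l m K) (h : Injective A.mulVec) : A.rank = Fintype.card m := by
  rw [rank, LinearMap.finrank_range_of_inj h, Module.finrank_fintype_fun_eq_card]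

theorem mulVec_injective_of_fromBlocks_zero_one {R l m o : Type*} [Semiring R]
    [Fintype l] [Fintype m] [DecidableEq m] {C : Matrix o l R} {D : Matrix o m R}
    (h : Injective (fromBlocks 0 (1 : Matrix m m R) C D).mulVec) : Injective C.mulVec := by
  intro v w hvw
  have := @h (Sum.elim v 0) (Sum.elim w 0) (by simp [fromBlocks_mulVec, hvw])
  exact congrArg (· ∘ Sum.inl) this

theorem mulVec_injective_of_fromCols_left {R l m n : Type*} [Semiring R]
    [Fintype l] [Fintype m] {A : Matrix n l R} {B : Matrix n m R}
    (h : Injective (fromCols A B).mulVec) : Injective A.mulVec := by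
  intro v w hvw
  have := @h (Sum.elim v 0) (Sum.elim w 0) (by simp [hvw])
  exact congrArg (· ∘ Sum.inl) this

theorem mulVec_injective_of_fromCols_right {R l m n : Type*} [Semiring R]
    [Fintype l] [Fintype m] {A : Matrix n l R} {B : Matrix n m R}
    (h : Injective (fromCols A B).mulVec) : Injective B.mulVec := by
  intro v w hvw
  have := @h (Sum.elim 0 v) (Sum.elim 0 w) (by simp [hvw])
  exact congrArg (· ∘ Sum.inr) this

theorem mulVec_injective_of_submatrix {R l m n : Type*} [NonUnitalNonAssocSemiring R] [Fintype m]
    {A : Matrix n m R} {f : l → n} (h : Injective (A.submatrix f id).mulVec) :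
    Injective A.mulVec :=
  fun _ _ hvw => h (funext fun i => congrFun hvw (f i))

theorem mul_pow_mulVec_eq_zero_of_forall_lt_card {R m n : Type*} [CommRing R] [Nontrivial R]
    [Fintype n] [DecidableEq n] (C : Matrix m n R) (A : Matrix n n R) (v : n → R)
    (h : ∀ k < Fintype.card n, (C * A ^ k) *ᵥ v = 0) (k : ℕ) : (C * A ^ k) *ᵥ v = 0 := by
  cases isEmpty_or_nonempty n
  · simp [Subsingleton.elim v 0]
  have hdeg : (X ^ k %ₘ A.charpoly).natDegree < Fintype.card n := by
    have hne : A.charpoly ≠ 1 := fun h1 => by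
      have := A.charpoly_natDegree_eq_dim
      rw [h1, natDegree_one] at this
      exact Fintype.card_ne_zero this.symm
    simpa [A.charpoly_natDegree_eq_dim] using
      natDegree_modByMonic_lt (X ^ k) A.charpoly_monic hne
  rw [pow_eq_aeval_mod_charpoly, aeval_eq_sum_range' hdeg, Matrix.mul_sum, sum_mulVec]
  refine sum_eq_zero fun t ht => ?_
  rw [Matrix.mul_smul, smul_mulVec, h t (mem_range.mp ht), smul_zero]

end Matrix

section Observability

variable {a b : ℕ} (C : Matrix (Fin a) (Fin b) ℝ) (A : Matrix (Fin b) (Fin b) ℝ)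

theorem obsMat_mulVec_apply {L : ℕ} (v : Fin b → ℝ) (i : Fin L) (j : Fin a) :
    (obsMat C A L *ᵥ v) (i, j) = ((C * A ^ (i : ℕ)) *ᵥ v) j :=
  rfl

theorem obsMat_mulVec_eq_zero_iff {L : ℕ} (v : Fin b → ℝ) :
    obsMat C A L *ᵥ v = 0 ↔ ∀ k < L, (C * A ^ k) *ᵥ v = 0 := by
  constructor
  · intro h k hk
    ext j
    exact congrFun h (⟨k, hk⟩, j)
  · intro h
    ext ⟨i, j⟩
    rw [obsMat_mulVec_apply, h i i.isLt, Pi.zero_apply, Pi.zero_apply]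

theorem rank_obsMat_of_mulVec_injective {L : ℕ}
    (h : Injective (obsMat C A L).mulVec) : (obsMat C A b).rank = b := by
  suffices Injective (obsMat C A b).mulVec by
    simpa using rank_eq_card_of_mulVec_injective _ this
  refine (injective_iff_map_eq_zero (obsMat C A b).mulVecLin).mpr fun v hv => ?_
  have hv : ∀ k < Fintype.card (Fin b), (C * A ^ k) *ᵥ v = 0 := by
    simpa using (obsMat_mulVec_eq_zero_iff C A v).mp hv
  refine (injective_iff_map_eq_zero (obsMat C A L).mulVecLin).mp h v ?_
  exact (obsMat_mulVec_eq_zero_iff C A v).mpr fun k _ =>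
    mul_pow_mulVec_eq_zero_of_forall_lt_card C A v hv k

end Observability

section DescriptorSystem

variable {q r m p : ℕ} (A1 : Matrix (Fin q) (Fin q) ℝ) (B1 : Matrix (Fin q) (Fin m) ℝ)
  (C1 : Matrix (Fin p) (Fin q) ℝ) (N : Matrix (Fin r) (Fin r) ℝ) (B2 : Matrix (Fin r) (Fin m) ℝ)
  (C2 : Matrix (Fin p) (Fin r) ℝ) (D : Matrix (Fin p) (Fin m) ℝ)
  {u : ℕ → Fin m → ℝ} {y : ℕ → Fin p → ℝ} {z1 : ℕ → Fin q → ℝ} {z2 : ℕ → Fin r → ℝ}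

theorem slow_state_eq (hslow : ∀ k, z1 (k + 1) = A1 *ᵥ z1 k + B1 *ᵥ u k) (k i : ℕ) :
    z1 (k + i) = (A1 ^ i) *ᵥ z1 k + ∑ t ∈ range i, (A1 ^ (i - 1 - t) * B1) *ᵥ u (k + t) := by
  induction i generalizing k with
  | zero => simp
  | succ i ih =>
    rw [← add_assoc, add_right_comm, ih, hslow, mulVec_add, mulVec_mulVec, ← pow_succ,
      sum_range_succ', add_assoc, add_comm (∑ t ∈ range i, _)]
    simp only [Nat.add_sub_cancel, Nat.sub_zero, add_zero, mulVec_mulVec, Nat.sub_sub,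
      add_comm 1, add_assoc]

theorem fast_state_eq (hfast : ∀ k, N *ᵥ z2 (k + 1) = z2 k + B2 *ᵥ u k) (k d : ℕ) :
    z2 k = (N ^ d) *ᵥ z2 (k + d) - ∑ t ∈ range d, (N ^ t * B2) *ᵥ u (k + t) := by
  induction d with
  | zero => simp
  | succ d ih =>
    have hstep : z2 (k + d) = N *ᵥ z2 (k + (d + 1)) - B2 *ᵥ u (k + d) := by
      rw [← add_assoc, hfast]
      abel
    rw [ih, hstep, mulVec_sub, mulVec_mulVec, ← pow_succ, sum_range_succ, mulVec_mulVec]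
    abel

/-- Coefficient of `u (k + t)` in `y (k + i)`: causal through the slow subsystem, anticausal
through the fast one up to the anchor time `k + L - 1`. -/
def ioCoeff (L i t : ℕ) : Matrix (Fin p) (Fin m) ℝ :=
  (if t ∈ range i then C1 * A1 ^ (i - 1 - t) * B1 else 0) + (if t = i then D else 0)
    - (if t ∈ Ico i (L - 1) then C2 * N ^ (t - i) * B2 else 0)

theorem sum_ioCoeff_mulVec {L i : ℕ} (hi : i < L) (w : ℕ → Fin m → ℝ) :
    ∑ t ∈ range L, ioCoeff A1 B1 C1 N B2 C2 D L i t *ᵥ w t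
      = ∑ t ∈ range i, (C1 * A1 ^ (i - 1 - t) * B1) *ᵥ w t + D *ᵥ w i
        - ∑ t ∈ Ico i (L - 1), (C2 * N ^ (t - i) * B2) *ᵥ w t := by
  simp only [ioCoeff, add_mulVec, sub_mulVec, apply_ite mulVec, ite_apply, zero_mulVec,
    sum_add_distrib, sum_sub_distrib, sum_ite_mem, sum_ite_eq']
  rw [inter_eq_right.mpr (range_subset_range.mpr hi.le), if_pos (mem_range.mpr hi),
    inter_eq_right.mpr fun t ht => mem_range.mpr ((mem_Ico.mp ht).2.trans_le (L.sub_le 1))]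

theorem output_eq (hslow : ∀ k, z1 (k + 1) = A1 *ᵥ z1 k + B1 *ᵥ u k)
    (hfast : ∀ k, N *ᵥ z2 (k + 1) = z2 k + B2 *ᵥ u k)
    (hout : ∀ k, y k = C1 *ᵥ z1 k + C2 *ᵥ z2 k + D *ᵥ u k) {L i : ℕ} (hi : i < L) (k : ℕ) :
    y (k + i) = (C1 * A1 ^ i) *ᵥ z1 k + (C2 * N ^ (L - 1 - i)) *ᵥ z2 (k + (L - 1))
      + ∑ t ∈ range L, ioCoeff A1 B1 C1 N B2 C2 D L i t *ᵥ u (k + t) := by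
  have hz2 : z2 (k + i) = (N ^ (L - 1 - i)) *ᵥ z2 (k + (L - 1))
      - ∑ t ∈ Ico i (L - 1), (N ^ (t - i) * B2) *ᵥ u (k + t) := by
    rw [fast_state_eq N B2 hfast (k + i) (L - 1 - i), sum_Ico_eq_sum_range]
    simp only [add_assoc, Nat.add_sub_cancel_left, Nat.add_sub_of_le (Nat.le_sub_one_of_lt hi)]
  rw [hout, slow_state_eq A1 B1 hslow, hz2, sum_ioCoeff_mulVec A1 B1 C1 N B2 C2 D hi,
    mulVec_add, mulVec_sub, mulVec_sum, mulVec_sum]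
  simp only [mulVec_mulVec, Matrix.mul_assoc]
  abel

def ioToeplitz (L : ℕ) : Matrix (Fin L × Fin p) (Fin L × Fin m) ℝ :=
  Matrix.of fun ia tb => ioCoeff A1 B1 C1 N B2 C2 D L ia.1 tb.1 ia.2 tb.2

theorem ioToeplitz_mulVec_apply {L : ℕ} (w : ℕ → Fin m → ℝ) (i : Fin L) (a : Fin p) :
    (ioToeplitz A1 B1 C1 N B2 C2 D L *ᵥ fun tb => w tb.1 tb.2) (i, a)
      = (∑ t ∈ range L, ioCoeff A1 B1 C1 N B2 C2 D L i t *ᵥ w t) a := by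
  rw [← Fin.sum_univ_eq_sum_range (fun t => ioCoeff A1 B1 C1 N B2 C2 D L i t *ᵥ w t),
    Finset.sum_apply, mulVec, dotProduct, Fintype.sum_prod_type]
  rfl

/-- The paper's fast observability matrix `[C₂ N^{L-1}; …; C₂]`, with block rows reversed. -/
def revObsMat {a b : ℕ} (C : Matrix (Fin a) (Fin b) ℝ) (A : Matrix (Fin b) (Fin b) ℝ) (L : ℕ) :
    Matrix (Fin L × Fin a) (Fin b) ℝ :=
  (obsMat C A L).submatrix (Prod.map Fin.rev id) id

theorem revObsMat_mulVec_apply {a b L : ℕ} (C : Matrix (Fin a) (Fin b) ℝ)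
    (A : Matrix (Fin b) (Fin b) ℝ) (v : Fin b → ℝ) (i : Fin L) (j : Fin a) :
    (revObsMat C A L *ᵥ v) (i, j) = ((C * A ^ (L - 1 - i)) *ᵥ v) j := by
  rw [show L - 1 - (i : ℕ) = Fin.rev i by simp [Fin.val_rev]; omega]
  rfl

def hankelFactor (L : ℕ) :
    Matrix ((Fin L × Fin m) ⊕ (Fin L × Fin p)) ((Fin q ⊕ Fin r) ⊕ (Fin L × Fin m)) ℝ :=
  fromBlocks 0 1 (fromCols (obsMat C1 A1 L) (revObsMat C2 N L))
    (ioToeplitz A1 B1 C1 N B2 C2 D L)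

theorem hankel_eq_hankelFactor_mul (hslow : ∀ k, z1 (k + 1) = A1 *ᵥ z1 k + B1 *ᵥ u k)
    (hfast : ∀ k, N *ᵥ z2 (k + 1) = z2 k + B2 *ᵥ u k)
    (hout : ∀ k, y k = C1 *ᵥ z1 k + C2 *ᵥ z2 k + D *ᵥ u k) (L c : ℕ) :
    fromRows (Hank m L c 0 u) (Hank p L c 0 y) = hankelFactor A1 B1 C1 N B2 C2 D L
      * (Matrix.of fun (j : Fin c) => Sum.elim (Sum.elim (z1 j) (z2 (j + (L - 1))))
          fun tb : Fin L × Fin m => u (j + tb.1) tb.2)ᵀ := by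
  ext (⟨i, a⟩ | ⟨i, a⟩) j
  all_goals
    change _ = (hankelFactor A1 B1 C1 N B2 C2 D L *ᵥ _) _
    simp only [hankelFactor, fromBlocks_mulVec, transpose_apply, of_apply, comp_def,
      Sum.elim_inl, Sum.elim_inr, fromRows_apply_inl, fromRows_apply_inr, Hank, zero_add]
  · simp [add_comm]
  · simp only [fromCols_mulVec_sumElim, Pi.add_apply, obsMat_mulVec_apply,
      revObsMat_mulVec_apply]
    rw [ioToeplitz_mulVec_apply A1 B1 C1 N B2 C2 D (fun t => u (j + t)), add_comm (i : ℕ),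
      output_eq A1 B1 C1 N B2 C2 D hslow hfast hout i.isLt]
    rfl

end DescriptorSystem

theorem data_driven_C_observability_general (q r m p T : ℕ)
    (A1 : Matrix (Fin q) (Fin q) ℝ) (B1 : Matrix (Fin q) (Fin m) ℝ)
    (C1 : Matrix (Fin p) (Fin q) ℝ)
    (N : Matrix (Fin r) (Fin r) ℝ) (B2 : Matrix (Fin r) (Fin m) ℝ)
    (C2 : Matrix (Fin p) (Fin r) ℝ) (D : Matrix (Fin p) (Fin m) ℝ)
    (u : ℕ → Fin m → ℝ) (y : ℕ → Fin p → ℝ)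
    (z1 : ℕ → Fin q → ℝ) (z2 : ℕ → Fin r → ℝ)
    (hslow : ∀ k : ℕ, z1 (k + 1) = A1.mulVec (z1 k) + B1.mulVec (u k))
    (hfast : ∀ k : ℕ, N.mulVec (z2 (k + 1)) = z2 k + B2.mulVec (u k))
    (hout : ∀ k : ℕ, y k = C1.mulVec (z1 k) + C2.mulVec (z2 k) + D.mulVec (u k))
    (hdata : ∃ L : ℕ, max q r ≤ L ∧
      (Matrix.fromRows (Hank m L (T - L + 1) 0 u) (Hank p L (T - L + 1) 0 y)).rank
        = (q + r) + m * L) :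
    (obsMat C1 A1 q).rank = q ∧ (obsMat C2 N r).rank = r := by
  obtain ⟨L, -, hrank⟩ := hdata
  rw [hankel_eq_hankelFactor_mul A1 B1 C1 N B2 C2 D hslow hfast hout] at hrank
  have hQ : Injective (hankelFactor A1 B1 C1 N B2 C2 D L).mulVec :=
    mulVec_injective_of_card_le_rank_mul _ _ (by rw [hrank]; simp [mul_comm])
  have hO := mulVec_injective_of_fromBlocks_zero_one hQ
  exact ⟨rank_obsMat_of_mulVec_injective C1 A1 (mulVec_injective_of_fromCols_left hO),
    rank_obsMat_of_mulVec_injective C2 N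
      (mulVec_injective_of_submatrix (mulVec_injective_of_fromCols_right hO))⟩

/-- Theorem 4: data-driven sufficient condition for C-observability of a regular
descriptor system in quasi-Weierstrass form with `n = q + r`. -/
theorem data_driven_C_observability (q r m p s T : ℕ)
    (A1 : Matrix (Fin q) (Fin q) ℝ) (B1 : Matrix (Fin q) (Fin m) ℝ)
    (C1 : Matrix (Fin p) (Fin q) ℝ)
    (N : Matrix (Fin r) (Fin r) ℝ) (B2 : Matrix (Fin r) (Fin m) ℝ)
    (C2 : Matrix (Fin p) (Fin r) ℝ) (D : Matrix (Fin p) (Fin m) ℝ)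
    (hN : N ^ s = 0)
    (u : ℕ → Fin m → ℝ) (y : ℕ → Fin p → ℝ)
    (z1 : ℕ → Fin q → ℝ) (z2 : ℕ → Fin r → ℝ)
    (hslow : ∀ k : ℕ, z1 (k + 1) = A1.mulVec (z1 k) + B1.mulVec (u k))
    (hfast : ∀ k : ℕ, N.mulVec (z2 (k + 1)) = z2 k + B2.mulVec (u k))
    (hout : ∀ k : ℕ, y k = C1.mulVec (z1 k) + C2.mulVec (z2 k) + D.mulVec (u k))
    (hdata : ∃ L : ℕ, max q r ≤ L ∧
      (Matrix.fromRows (Hank m L (T - L + 1) 0 u) (Hank p L (T - L + 1) 0 y)).rank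
        = (q + r) + m * L) :
    (obsMat C1 A1 q).rank = q ∧ (obsMat C2 N r).rank = r :=
  data_driven_C_observability_general q r m p T A1 B1 C1 N B2 C2 D u y z1 z2 hslow hfast hout hdata
end
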